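/- arXiv:2207.09427 — 4 statements merged into one kernel-verified Lean document; each statement's English description precedes it below -/
import Mathlib

section
/- For any graphon W : [0,1]² → [0,1] (symmetric measurable), any finite graph H, any independent set I ⊆ V(H), and any positive integer q, the homomorphism density of the q-book of H along I satisfies t(H_I^q, W) ≥ t(H, W)^q. -/
open MeasureTheory

abbrev unitI : Type := Set.Icc (0:ℝ) 1

structure Graphon where
  W : unitI → unitI → ℝ
  symm : ∀ x y, W x y = W y x
  measurable : Measurable fun p : unitI × unitI => W p.1 p.2
  nonneg : ∀ x y, 0 ≤ W x y
  le_one : ∀ x y, W x y ≤ 1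

def Graphon.compl (W : Graphon) : Graphon where
  W x y := 1 - W.W x y
  symm x y := by show 1 - W.W x y = 1 - W.W y x; rw [W.symm]
  measurable := measurable_const.sub W.measurable
  nonneg x y := by show 0 ≤ 1 - W.W x y; linarith [W.le_one x y]
  le_one x y := by show 1 - W.W x y ≤ 1; linarith [W.nonneg x y]

noncomputable def homDensity {V : Type} [Fintype V] (H : SimpleGraph V) (W : Graphon) : ℝ :=
  ∫ x : V → unitI,
    ∏ᶠ (e : Sym2 V) (_ : e ∈ H.edgeSet),
      Sym2.lift ⟨fun u v => W.W (x u) (x v), fun u v => W.symm (x u) (x v)⟩ e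

def IsCommon {V : Type} [Fintype V] (H : SimpleGraph V) : Prop :=
  ∀ W : Graphon,
    (2:ℝ) ^ (1 - (Nat.card H.edgeSet : ℤ)) ≤ homDensity H W + homDensity H W.compl

/-- Vertex set of the `q`-book of a graph on `V` along `I`. -/
abbrev BookVerts (V : Type) [DecidableEq V] (I : Finset V) (q : ℕ) : Type :=
  {v : V // v ∈ I} ⊕ (Fin q × {v : V // v ∉ I})

/-- The canonical embedding of the `j`-th page. -/
def bookEmb {V : Type} [DecidableEq V] (I : Finset V) (q : ℕ) (j : Fin q) (v : V) :
    BookVerts V I q :=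
  if h : v ∈ I then Sum.inl ⟨v, h⟩ else Sum.inr (j, ⟨v, h⟩)

lemma bookEmb_injective {V : Type} [DecidableEq V] (I : Finset V) (q : ℕ) (j : Fin q) :
    Function.Injective (bookEmb I q j) := by
  intro a b hab
  unfold bookEmb at hab
  split_ifs at hab with h1 h2 h2 <;> simp_all

/-- The `q`-book of `H` along `I`. -/
def book {V : Type} [DecidableEq V] (H : SimpleGraph V) (I : Finset V) (q : ℕ) :
    SimpleGraph (BookVerts V I q) where
  Adj a b := ∃ (j : Fin q) (u v : V), H.Adj u v ∧ a = bookEmb I q j u ∧ b = bookEmb I q j v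
  symm := ⟨by rintro a b ⟨j, u, v, h, ha, hb⟩; exact ⟨j, v, u, h.symm, hb, ha⟩⟩
  loopless := ⟨by
    rintro a ⟨j, u, v, h, ha, hb⟩
    exact H.loopless.irrefl v (by rwa [bookEmb_injective I q j (ha.symm.trans hb ▸ rfl : bookEmb I q j u = bookEmb I q j v)] at h)⟩

/-- `I` is an independent set of `H`. -/
def IndepIn {V : Type} (H : SimpleGraph V) (I : Finset V) : Prop :=
  ∀ u ∈ I, ∀ v ∈ I, ¬ H.Adj u v

/-!
Split a vertex assignment `x : V → [0,1]` into its restriction `y` to `I` and its restriction `z`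
to the other vertices, and let `g y = ∫ z, ∏_{uv ∈ E(H)} W(x_u, x_v)` be the density of `H` rooted
at `y`, so that `t(H, W) = ∫ g`.
The `q` pages of the book share the coordinates `y` and carry independent copies of `z`, and the
book's edge integrand dominates the product of the `q` page integrands (an edge lying on several
pages is counted once, and `W ≤ 1`). Fubini therefore gives `t(H_I^q, W) ≥ ∫ g ^ q`, and Jensen's
inequality for `t ↦ t ^ q` gives `∫ g ^ q ≥ (∫ g) ^ q`.
-/

theorem finprod_mem_mem_Icc {α : Type*} {s : Set α} {f : α → ℝ}
    (hf : ∀ a ∈ s, f a ∈ Set.Icc 0 1) : ∏ᶠ a ∈ s, f a ∈ Set.Icc 0 1 :=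
  finprod_mem_induction (· ∈ Set.Icc (0:ℝ) 1) ⟨zero_le_one, le_rfl⟩
    (fun _ _ => unitInterval.mul_mem) hf

theorem finprod_mem_mul_finprod_mem_le_union {α : Type*} {s t : Set α} {f : α → ℝ}
    (hf : ∀ a, f a ∈ Set.Icc 0 1) (hs : s.Finite) (ht : t.Finite) :
    (∏ᶠ a ∈ s, f a) * ∏ᶠ a ∈ t, f a ≤ ∏ᶠ a ∈ s ∪ t, f a := by
  rw [← finprod_mem_union_inter hs ht]
  obtain ⟨hunion, -⟩ := finprod_mem_mem_Icc fun a (_ : a ∈ s ∪ t) => hf a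
  obtain ⟨-, hinter⟩ := finprod_mem_mem_Icc fun a (_ : a ∈ s ∩ t) => hf a
  exact mul_le_of_le_one_right hunion hinter

theorem prod_finprod_mem_le_finprod_mem_iUnion {ι α : Type*} [Fintype ι] {t : ι → Set α}
    {f : α → ℝ} (hf : ∀ a, f a ∈ Set.Icc 0 1) (ht : ∀ i, (t i).Finite) :
    ∏ i, ∏ᶠ a ∈ t i, f a ≤ ∏ᶠ a ∈ ⋃ i, t i, f a := by
  classical
  suffices ∀ S : Finset ι, ∏ i ∈ S, ∏ᶠ a ∈ t i, f a ≤ ∏ᶠ a ∈ ⋃ i ∈ S, t i, f a by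
    simpa using this Finset.univ
  intro S
  induction S using Finset.induction_on with
  | empty => simp
  | insert i S hi ih =>
    rw [Finset.prod_insert hi, Finset.set_biUnion_insert]
    calc (∏ᶠ a ∈ t i, f a) * ∏ j ∈ S, ∏ᶠ a ∈ t j, f a
        ≤ (∏ᶠ a ∈ t i, f a) * ∏ᶠ a ∈ ⋃ j ∈ S, t j, f a :=
          mul_le_mul_of_nonneg_left ih (finprod_mem_mem_Icc fun a _ => hf a).1
      _ ≤ _ := finprod_mem_mul_finprod_mem_le_union hf (ht i)
          (S.finite_toSet.biUnion fun j _ => ht j)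

namespace MeasureTheory

theorem pow_integral_le_integral_pow {Ω : Type*} [MeasurableSpace Ω] {μ : Measure Ω}
    [IsProbabilityMeasure μ] {g : Ω → ℝ} (n : ℕ) (hg0 : 0 ≤ᵐ[μ] g) (hg : Integrable g μ)
    (hgn : Integrable (fun ω => g ω ^ n) μ) :
    (∫ ω, g ω ∂μ) ^ n ≤ ∫ ω, g ω ^ n ∂μ :=
  (convexOn_pow n).map_integral_le (continuous_pow n).continuousOn isClosed_Ici hg0 hg hgn

theorem integral_mem_Icc_zero_one {Ω : Type*} [MeasurableSpace Ω] {μ : Measure Ω}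
    [IsProbabilityMeasure μ] {f : Ω → ℝ} (hf : ∀ ω, f ω ∈ Set.Icc 0 1) :
    ∫ ω, f ω ∂μ ∈ Set.Icc 0 1 := by
  refine ⟨integral_nonneg fun ω => (hf ω).1, ?_⟩
  calc ∫ ω, f ω ∂μ ≤ ∫ _, (1 : ℝ) ∂μ :=
        integral_mono_of_nonneg (ae_of_all _ fun ω => (hf ω).1) (integrable_const 1)
          (ae_of_all _ fun ω => (hf ω).2)
    _ = 1 := by simp

variable {E : Type*} [MeasureSpace E] [IsProbabilityMeasure (volume : Measure E)]

theorem volume_measurePreserving_curry_symm (ι κ : Type*) [Fintype ι] [Fintype κ] :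
    MeasurePreserving (MeasurableEquiv.curry ι κ E).symm volume volume := by
  refine ⟨(MeasurableEquiv.curry ι κ E).symm.measurable, ?_⟩
  simpa only [Measure.infinitePi_eq_pi, ← volume_pi] using
    Measure.infinitePi_map_curry_symm (ι := ι) (κ := κ) fun _ _ => (volume : Measure E)

theorem integral_prod_comp_curry_eq_pow {ι κ : Type*} [Fintype ι] [Fintype κ]
    (f : (κ → E) → ℝ) :
    ∫ x : ι × κ → E, ∏ i, f (Function.curry x i) = (∫ y, f y) ^ Fintype.card ι := by
  rw [← integral_fintype_prod_volume_eq_pow,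
    ← (volume_measurePreserving_curry_symm ι κ).integral_comp']
  simp [MeasurableEquiv.coe_curry_symm]

theorem integral_eq_integral_integral_piSubtype {ι : Type*} [Fintype ι] (p : ι → Prop)
    [DecidablePred p] {f : (ι → E) → ℝ} (hf : Integrable f) :
    ∫ x, f x = ∫ y : {i // p i} → E, ∫ z : {i // ¬ p i} → E,
      f ((Equiv.piEquivPiSubtypeProd p fun _ => E).symm (y, z)) := by
  have h := (volume_preserving_piEquivPiSubtypeProd (fun _ : ι => E) p).symm
  rw [← h.integral_comp', Measure.volume_eq_prod]
  refine integral_prod _ ?_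
  exact (h.integrable_comp_emb (MeasurableEquiv.measurableEmbedding _)).2 hf

theorem integral_prod_pages_eq_integral_pow {α ι β : Type*} [Fintype α] [Fintype ι] [Fintype β]
    {f : (α → E) → (β → E) → ℝ} (hf : Measurable (Function.uncurry f))
    (hf01 : ∀ y z, f y z ∈ Set.Icc 0 1) :
    ∫ x : α ⊕ ι × β → E, ∏ j, f (x ∘ Sum.inl) (fun b => x (Sum.inr (j, b))) =
      ∫ y, (∫ z, f y z) ^ Fintype.card ι := by
  rw [← (volume_measurePreserving_sumPiEquivProdPi_symm fun _ => E).integral_comp',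
    Measure.volume_eq_prod, integral_prod]
  · exact integral_congr_ae (ae_of_all _ fun y => integral_prod_comp_curry_eq_pow (f y))
  · refine Integrable.of_mem_Icc 0 1 ?_ (ae_of_all _ fun w => ?_)
    · refine (Finset.measurable_prod _ fun j _ => ?_).aemeasurable
      exact hf.comp (f := fun w : (α → E) × (ι × β → E) => (w.1, fun b => w.2 (j, b)))
        (by fun_prop)
    · exact Finset.prod_induction _ (· ∈ Set.Icc (0:ℝ) 1) (fun _ _ => unitInterval.mul_mem)
        ⟨zero_le_one, le_rfl⟩ fun j _ => hf01 _ _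

end MeasureTheory

namespace Graphon

noncomputable def edgeWeight (W : Graphon) {α : Type*} (x : α → unitI) : Sym2 α → ℝ :=
  Sym2.lift ⟨fun u v => W.W (x u) (x v), fun u v => W.symm (x u) (x v)⟩

variable (W : Graphon) {α β : Type*}

theorem edgeWeight_mem_Icc (x : α → unitI) (e : Sym2 α) : W.edgeWeight x e ∈ Set.Icc 0 1 := by
  induction e using Sym2.ind with
  | _ u v => exact ⟨W.nonneg _ _, W.le_one _ _⟩

theorem edgeWeight_map (f : α → β) (x : β → unitI) (e : Sym2 α) :
    W.edgeWeight x (Sym2.map f e) = W.edgeWeight (x ∘ f) e := by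
  induction e using Sym2.ind with
  | _ u v => rfl

theorem measurable_edgeWeight (e : Sym2 α) :
    Measurable fun x : α → unitI => W.edgeWeight x e := by
  induction e using Sym2.ind with
  | _ u v =>
    show Measurable fun x : α → unitI => W.W (x u) (x v)
    exact W.measurable.comp (f := fun x : α → unitI => (x u, x v)) (by fun_prop)

noncomputable def homIntegrand {V : Type*} (H : SimpleGraph V) (x : V → unitI) : ℝ :=
  ∏ᶠ e ∈ H.edgeSet, W.edgeWeight x e

variable {V : Type*} (H : SimpleGraph V)

theorem homIntegrand_mem_Icc (x : V → unitI) : W.homIntegrand H x ∈ Set.Icc 0 1 :=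
  finprod_mem_mem_Icc fun e _ => W.edgeWeight_mem_Icc x e

theorem measurable_homIntegrand [Finite V] : Measurable (W.homIntegrand H) := by
  unfold homIntegrand
  simp_rw [finprod_mem_eq_finite_toFinset_prod _ H.edgeSet.toFinite]
  exact Finset.measurable_prod _ fun e _ => W.measurable_edgeWeight e

theorem integrable_homIntegrand [Fintype V] : Integrable (W.homIntegrand H) :=
  Integrable.of_mem_Icc 0 1 (W.measurable_homIntegrand H).aemeasurable
    (ae_of_all _ (W.homIntegrand_mem_Icc H))

end Graphon

theorem homDensity_eq_integral_homIntegrand {V : Type} [Fintype V] (H : SimpleGraph V)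
    (W : Graphon) : homDensity H W = ∫ x, W.homIntegrand H x := rfl

section Book

variable {V : Type} [DecidableEq V] (I : Finset V) (q : ℕ)

theorem edgeSet_book (H : SimpleGraph V) :
    (book H I q).edgeSet = ⋃ j, Sym2.map (bookEmb I q j) '' H.edgeSet := by
  ext e
  induction e using Sym2.ind with
  | _ a b =>
    simp only [SimpleGraph.mem_edgeSet, Set.mem_iUnion, Set.mem_image]
    constructor
    · rintro ⟨j, u, v, huv, rfl, rfl⟩
      exact ⟨j, s(u, v), huv, rfl⟩
    · rintro ⟨j, e, he, hab⟩
      induction e using Sym2.ind with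
      | _ u v =>
        rw [Sym2.map_mk, Sym2.eq_iff] at hab
        rcases hab with ⟨rfl, rfl⟩ | ⟨rfl, rfl⟩
        · exact ⟨j, u, v, he, rfl, rfl⟩
        · exact ⟨j, v, u, he.symm, rfl, rfl⟩

theorem comp_bookEmb {α : Type*} (x : BookVerts V I q → α) (j : Fin q) :
    x ∘ bookEmb I q j = (Equiv.piEquivPiSubtypeProd (· ∈ I) fun _ => α).symm
      (x ∘ Sum.inl, fun b => x (Sum.inr (j, b))) := by
  funext v
  by_cases hv : v ∈ I <;> simp [bookEmb, hv]

theorem Graphon.prod_homIntegrand_comp_bookEmb_le [Fintype V] (W : Graphon) (H : SimpleGraph V)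
    (x : BookVerts V I q → unitI) :
    ∏ j, W.homIntegrand H (x ∘ bookEmb I q j) ≤ W.homIntegrand (book H I q) x := by
  have hpage (j : Fin q) : W.homIntegrand H (x ∘ bookEmb I q j) =
      ∏ᶠ e ∈ Sym2.map (bookEmb I q j) '' H.edgeSet, W.edgeWeight x e := by
    rw [finprod_mem_image (Sym2.map.injective (bookEmb_injective I q j)).injOn]
    simp only [edgeWeight_map, homIntegrand]
  calc ∏ j, W.homIntegrand H (x ∘ bookEmb I q j)
      = ∏ j, ∏ᶠ e ∈ Sym2.map (bookEmb I q j) '' H.edgeSet, W.edgeWeight x e :=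
        Finset.prod_congr rfl fun j _ => hpage j
    _ ≤ ∏ᶠ e ∈ ⋃ j, Sym2.map (bookEmb I q j) '' H.edgeSet, W.edgeWeight x e :=
        prod_finprod_mem_le_finprod_mem_iUnion (W.edgeWeight_mem_Icc x)
          fun j => H.edgeSet.toFinite.image _
    _ = W.homIntegrand (book H I q) x := by rw [homIntegrand, edgeSet_book]

end Book

section Rooted

variable {V : Type} [Fintype V] [DecidableEq V] (W : Graphon) (H : SimpleGraph V) (I : Finset V)

noncomputable def Graphon.rootedHomDensity (y : {v // v ∈ I} → unitI) : ℝ :=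
  ∫ z : {v // v ∉ I} → unitI,
    W.homIntegrand H ((Equiv.piEquivPiSubtypeProd (· ∈ I) fun _ => unitI).symm (y, z))

theorem Graphon.measurable_homIntegrand_piEquivPiSubtypeProd_symm :
    Measurable <| Function.uncurry fun (y : {v // v ∈ I} → unitI) (z : {v // v ∉ I} → unitI) =>
      W.homIntegrand H ((Equiv.piEquivPiSubtypeProd (· ∈ I) fun _ => unitI).symm (y, z)) :=
  (W.measurable_homIntegrand H).comp (MeasurableEquiv.piEquivPiSubtypeProd _ _).symm.measurable

theorem Graphon.rootedHomDensity_mem_Icc (y : {v // v ∈ I} → unitI) :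
    W.rootedHomDensity H I y ∈ Set.Icc 0 1 :=
  integral_mem_Icc_zero_one fun _ => W.homIntegrand_mem_Icc H _

theorem Graphon.measurable_rootedHomDensity : Measurable (W.rootedHomDensity H I) :=
  (W.measurable_homIntegrand_piEquivPiSubtypeProd_symm H I).stronglyMeasurable
    |>.integral_prod_right.measurable

theorem homDensity_eq_integral_rootedHomDensity :
    homDensity H W = ∫ y, W.rootedHomDensity H I y := by
  simp only [homDensity_eq_integral_homIntegrand, Graphon.rootedHomDensity]
  -- `convert` identifies the two `Fintype` instances on `{v // v ∈ I}`
  convert integral_eq_integral_integral_piSubtype (· ∈ I) (W.integrable_homIntegrand H)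

theorem integral_rootedHomDensity_pow_le_homDensity_book (q : ℕ) :
    ∫ y, W.rootedHomDensity H I y ^ q ≤ homDensity (book H I q) W := by
  have hpages := integral_prod_pages_eq_integral_pow (ι := Fin q)
    (W.measurable_homIntegrand_piEquivPiSubtypeProd_symm H I)
    fun _ _ => W.homIntegrand_mem_Icc H _
  rw [Fintype.card_fin] at hpages
  simp only [Graphon.rootedHomDensity]
  rw [← hpages]
  refine integral_mono_of_nonneg (ae_of_all _ fun x => ?_) (W.integrable_homIntegrand _)
    (ae_of_all _ fun x => ?_)
  · exact Finset.prod_nonneg fun j _ => (W.homIntegrand_mem_Icc H _).1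
  · simp only [← comp_bookEmb]
    exact W.prod_homIntegrand_comp_bookEmb_le I q H x

end Rooted

theorem book_homDensity_ge_general {V : Type} [Fintype V] [DecidableEq V]
    (H : SimpleGraph V) (I : Finset V) (q : ℕ)
    (W : Graphon) :
    homDensity H W ^ q ≤ homDensity (book H I q) W := by
  have hmeas := W.measurable_rootedHomDensity H I
  have h01 := W.rootedHomDensity_mem_Icc H I
  rw [homDensity_eq_integral_rootedHomDensity W H I]
  refine (pow_integral_le_integral_pow q (ae_of_all _ fun y => (h01 y).1) ?_ ?_).trans
    (integral_rootedHomDensity_pow_le_homDensity_book W H I q)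
  · exact Integrable.of_mem_Icc 0 1 hmeas.aemeasurable (ae_of_all _ h01)
  · exact Integrable.of_mem_Icc 0 1 (hmeas.pow_const q).aemeasurable
      (ae_of_all _ fun y => ⟨pow_nonneg (h01 y).1 q, pow_le_one₀ (h01 y).1 (h01 y).2⟩)

/-- Jensen's inequality for the `q`-book: `t(H_I^q, W) ≥ t(H, W)^q`. -/
theorem book_homDensity_ge {V : Type} [Fintype V] [DecidableEq V]
    (H : SimpleGraph V) (I : Finset V) (hI : IndepIn H I) (q : ℕ) (hq : 0 < q)
    (W : Graphon) :
    homDensity H W ^ q ≤ homDensity (book H I q) W :=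
  book_homDensity_ge_general H I q W
end

section
/- The Cartesian product of r−1 copies of the complete graph K_q (with q ≥ 2, r ≥ 2) is an (r−1)(q−1)-regular graph that is (r−1)(q−1)-connected. -/
/-- The Cartesian product of `n` copies of `K_q`: vertices are tuples in `[q]^n`,
adjacent iff they differ in exactly one coordinate. -/
def hammingGraph (n q : ℕ) : SimpleGraph (Fin n → Fin q) where
  Adj f g := ∃! j : Fin n, f j ≠ g j
  symm := ⟨by rintro f g ⟨j, hj, hu⟩; exact ⟨j, hj.symm, fun k hk => hu k hk.symm⟩⟩
  loopless := ⟨by rintro f ⟨j, hj, -⟩; exact hj rfl⟩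

/-- A graph is `k`-connected if it has more than `k` vertices and removing any
set of fewer than `k` vertices leaves it connected. -/
def GraphKConnected {V : Type} (G : SimpleGraph V) (k : ℕ) : Prop :=
  k < Nat.card V ∧
    ∀ S : Set V, S.Finite → S.ncard < k → (G.induce Sᶜ).Connected

/-! For connectivity, induct on `n` and cut `[q]^(n+1)` by the last coordinate into `q` layers,
each a copy of `[q]^n`, which meet `S` in `q` slices. If `|S| < (n+1)(q-1)`, the least slice has
at most `n` and fewer than `n(q-1)` points, so removing it leaves its layer connected by induction.
A free vertex in a layer whose slice has fewer than `n(q-1)` points walks inside its layer to a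
column whose vertex in the least layer is free: the two slices block fewer than `nq ≤ q^n` columns.
At most one slice has `n(q-1)` points or more, and a free vertex in its layer has a free neighbour
in its own column, which lies in another layer. -/

open SimpleGraph Finset

theorem Set.nonempty_compl_of_ncard_lt_card {α : Type*} [Finite α] {s : Set α}
    (h : s.ncard < Nat.card α) : sᶜ.Nonempty := by
  rw [Set.nonempty_compl]
  rintro rfl
  simp at h

theorem graphKConnected_of_preconnected {V : Type} [Finite V] {G : SimpleGraph V} {k : ℕ}
    (hk : k < Nat.card V) (h : ∀ S : Set V, S.ncard < k → (G.induce Sᶜ).Preconnected) :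
    GraphKConnected G k := by
  refine ⟨hk, fun S _ hS => ?_⟩
  have : Nonempty (Sᶜ : Set V) := (Set.nonempty_compl_of_ncard_lt_card (hS.trans hk)).to_subtype
  exact ⟨h S hS⟩

section Degree

variable {n q : ℕ}

theorem hammingGraph_adj_iff_exists_update {v w : Fin n → Fin q} :
    (hammingGraph n q).Adj v w ↔ ∃ j c, c ≠ v j ∧ Function.update v j c = w := by
  constructor
  · rintro ⟨j, hj, hu⟩
    refine ⟨j, w j, Ne.symm hj, funext fun k => ?_⟩
    rcases eq_or_ne k j with rfl | hk
    · simp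
    · rw [Function.update_of_ne hk]
      exact not_not.mp (mt (hu k) hk)
  · rintro ⟨j, c, hc, rfl⟩
    refine ⟨j, by simpa using hc.symm, fun k hk => ?_⟩
    by_contra hkj
    simp [Function.update_of_ne hkj] at hk

theorem ncard_hammingGraph_adj (v : Fin n → Fin q) :
    {w | (hammingGraph n q).Adj v w}.ncard = n * (q - 1) := by
  set f : (Σ j : Fin n, {c : Fin q // c ≠ v j}) → (Fin n → Fin q) :=
    fun p => Function.update v p.1 p.2
  have hf : Function.Injective f := by
    rintro ⟨j, c, hc⟩ ⟨j', c', hc'⟩ h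
    obtain rfl : j = j' := by
      by_contra hjj
      exact hc (by simpa [f, Function.update_of_ne hjj] using congrFun h j)
    obtain rfl : c = c' := by simpa [f] using congrFun h j
    rfl
  have hrange : {w | (hammingGraph n q).Adj v w} = Set.range f := by
    ext w
    simp [f, hammingGraph_adj_iff_exists_update]
  rw [hrange, Set.ncard_range_of_injective hf, Nat.card_sigma]
  simp

end Degree

section Slices

variable {α : Type*} [Fintype α] {n : ℕ}

def lastSlice (S : Set (Fin (n + 1) → α)) (a : α) : Set (Fin n → α) :=
  (Fin.snoc · a) ⁻¹' S

theorem sum_ncard_lastSlice (S : Set (Fin (n + 1) → α)) :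
    ∑ a, (lastSlice S a).ncard = S.ncard := by
  have e : (Σ a, lastSlice S a) ≃ S :=
    (Equiv.subtypeProdEquivSigmaSubtype fun a x => Fin.snoc x a ∈ S).symm.trans
      ((Fin.snocEquiv fun _ => α).subtypeEquiv fun _ => Iff.rfl)
  simp_rw [← Nat.card_coe_set_eq, ← Nat.card_sigma, Nat.card_congr e]

theorem ncard_lastSlice_add_le (S : Set (Fin (n + 1) → α)) {a b : α} (hab : a ≠ b) :
    (lastSlice S a).ncard + (lastSlice S b).ncard ≤ S.ncard := by
  classical
  rw [← sum_ncard_lastSlice, ← add_sum_erase _ _ (mem_univ a)]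
  gcongr
  exact single_le_sum (f := fun b => (lastSlice S b).ncard) (fun _ _ => Nat.zero_le _)
    (mem_erase.mpr ⟨hab.symm, mem_univ b⟩)

theorem exists_snoc_notMem_of_ncard_lt (S : Set (Fin (n + 1) → α)) (x : Fin n → α) {c : α}
    (h : S.ncard < (lastSlice S c).ncard + (Fintype.card α - 1)) :
    ∃ b ≠ c, Fin.snoc x b ∉ S := by
  classical
  by_contra! hS
  have hslice : ∀ b ∈ univ.erase c, 1 ≤ (lastSlice S b).ncard := fun b hb =>
    (Set.ncard_pos).mpr ⟨x, hS b (ne_of_mem_erase hb)⟩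
  have := card_nsmul_le_sum _ _ _ hslice
  rw [card_erase_of_mem (mem_univ c), card_univ, smul_eq_mul, mul_one] at this
  rw [← sum_ncard_lastSlice, ← add_sum_erase _ _ (mem_univ c)] at h
  omega

theorem exists_snoc_notMem_of_ncard_add_lt (S : Set (Fin (n + 1) → α)) {a b : α}
    (h : (lastSlice S a).ncard + (lastSlice S b).ncard < Fintype.card α ^ n) :
    ∃ x, Fin.snoc x a ∉ S ∧ Fin.snoc x b ∉ S := by
  have hcard : (lastSlice S a ∪ lastSlice S b).ncard < Nat.card (Fin n → α) := by
    simpa using (Set.ncard_union_le _ _).trans_lt h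
  obtain ⟨x, hx⟩ := Set.nonempty_compl_of_ncard_lt_card hcard
  simp only [Set.mem_compl_iff, Set.mem_union, not_or] at hx
  exact ⟨x, hx⟩

end Slices

section Connectivity

variable {n q : ℕ}

theorem hammingGraph_one_eq_top : hammingGraph 1 q = ⊤ := by
  ext x y
  refine ⟨fun h => h.ne, fun hxy => ?_⟩
  obtain ⟨j, hj⟩ := Function.ne_iff.mp hxy
  exact ⟨j, hj, fun k _ => Subsingleton.elim k j⟩

theorem hammingGraph_adj_snoc_snoc_of_ne (x : Fin n → Fin q) {a b : Fin q} (hab : a ≠ b) :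
    (hammingGraph (n + 1) q).Adj (Fin.snoc x a) (Fin.snoc x b) := by
  refine ⟨Fin.last n, by simpa using hab, fun k hk => ?_⟩
  induction k using Fin.lastCases with
  | last => rfl
  | cast i => simp at hk

theorem hammingGraph_adj_snoc_snoc_of_adj {x y : Fin n → Fin q} (a : Fin q)
    (h : (hammingGraph n q).Adj x y) :
    (hammingGraph (n + 1) q).Adj (Fin.snoc x a) (Fin.snoc y a) := by
  obtain ⟨j, hj, hu⟩ := h
  refine ⟨j.castSucc, by simpa using hj, fun k hk => ?_⟩
  induction k using Fin.lastCases with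
  | last => simp at hk
  | cast i => exact congrArg Fin.castSucc (hu i (by simpa using hk))

variable {S : Set (Fin (n + 1) → Fin q)}

theorem reachable_snoc_snoc_of_same_init (x : Fin n → Fin q) {a b : Fin q}
    (ha : Fin.snoc x a ∉ S) (hb : Fin.snoc x b ∉ S) :
    ((hammingGraph (n + 1) q).induce Sᶜ).Reachable ⟨Fin.snoc x a, ha⟩ ⟨Fin.snoc x b, hb⟩ := by
  rcases eq_or_ne a b with rfl | hab
  · rfl
  · exact Adj.reachable (hammingGraph_adj_snoc_snoc_of_ne x hab)

theorem reachable_snoc_snoc_of_same_last {a : Fin q}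
    (h : ((hammingGraph n q).induce (lastSlice S a)ᶜ).Preconnected) {x y : Fin n → Fin q}
    (hx : Fin.snoc x a ∉ S) (hy : Fin.snoc y a ∉ S) :
    ((hammingGraph (n + 1) q).induce Sᶜ).Reachable ⟨Fin.snoc x a, hx⟩ ⟨Fin.snoc y a, hy⟩ :=
  (h ⟨x, hx⟩ ⟨y, hy⟩).map (G' := (hammingGraph (n + 1) q).induce Sᶜ)
    { toFun := fun z => ⟨Fin.snoc z.1 a, z.2⟩
      map_rel' := hammingGraph_adj_snoc_snoc_of_adj a }

theorem exists_reachable_snoc_of_preconnected {a c : Fin q}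
    (hc : ((hammingGraph n q).induce (lastSlice S c)ᶜ).Preconnected)
    (h : (lastSlice S c).ncard + (lastSlice S a).ncard < q ^ n)
    {x : Fin n → Fin q} (hx : Fin.snoc x c ∉ S) :
    ∃ (z : Fin n → Fin q) (hz : Fin.snoc z a ∉ S),
      ((hammingGraph (n + 1) q).induce Sᶜ).Reachable ⟨Fin.snoc x c, hx⟩ ⟨Fin.snoc z a, hz⟩ := by
  obtain ⟨z, hzc, hza⟩ := exists_snoc_notMem_of_ncard_add_lt S (by simpa using h)
  exact ⟨z, hza, (reachable_snoc_snoc_of_same_last hc hx hzc).trans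
    (reachable_snoc_snoc_of_same_init z hzc hza)⟩

theorem hammingGraph_induce_compl_preconnected_succ (hn : 1 ≤ n)
    (ih : ∀ T : Set (Fin n → Fin q), T.ncard < n * (q - 1) →
      ((hammingGraph n q).induce Tᶜ).Preconnected)
    (hS : S.ncard < (n + 1) * (q - 1)) :
    ((hammingGraph (n + 1) q).induce Sᶜ).Preconnected := by
  classical
  set s : Fin q → ℕ := fun a => (lastSlice S a).ncard with hs
  obtain ⟨p, rfl⟩ : ∃ p, q = p + 1 := Nat.exists_eq_succ_of_ne_zero (by rintro rfl; simp at hS)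
  simp only [Nat.add_sub_cancel] at ih hS
  have hp : 0 < p := Nat.pos_of_ne_zero (by rintro rfl; simp at hS)
  obtain ⟨a₀, -, hmin⟩ := exists_min_image univ s ⟨0, mem_univ _⟩
  have hq_mul : (p + 1) * s a₀ ≤ S.ncard := by
    simpa [hs, sum_ncard_lastSlice] using
      card_nsmul_le_sum univ s (s a₀) fun b _ => hmin b (mem_univ b)
  have ha₀_le : s a₀ ≤ n := by nlinarith
  have ha₀_lt : s a₀ < n * p := by nlinarith
  have hpow : (p + 1) * n ≤ (p + 1) ^ n := Nat.mul_le_pow (by omega) n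
  have reach_good : ∀ c x (hx : Fin.snoc x c ∉ S), s c < n * p →
      ∃ z hz, ((hammingGraph (n + 1) (p + 1)).induce Sᶜ).Reachable
        ⟨Fin.snoc x c, hx⟩ ⟨Fin.snoc z a₀, hz⟩ :=
    fun c x hx hc => exists_reachable_snoc_of_preconnected (ih _ hc) (by linarith) hx
  have reach : ∀ w : (Sᶜ : Set _), ∃ z hz,
      ((hammingGraph (n + 1) (p + 1)).induce Sᶜ).Reachable w ⟨Fin.snoc z a₀, hz⟩ := by
    rintro ⟨w, hw⟩
    induction w using Fin.snocCases with | snoc x c => ?_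
    by_cases hc : s c < n * p
    · exact reach_good c x hw hc
    obtain ⟨b, hbc, hb⟩ := exists_snoc_notMem_of_ncard_lt S x (c := c)
      (by simp only [Fintype.card_fin, Nat.add_sub_cancel]; linarith)
    have hb_good : s b < n * p := by
      linarith [ncard_lastSlice_add_le S hbc, Nat.le_mul_of_pos_left p (by omega : 0 < n)]
    obtain ⟨z, hz, hbz⟩ := reach_good b x hb hb_good
    exact ⟨z, hz, (reachable_snoc_snoc_of_same_init x hw hb).trans hbz⟩
  intro u v
  obtain ⟨z, hz, hu⟩ := reach u
  obtain ⟨z', hz', hv⟩ := reach v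
  exact hu.trans ((reachable_snoc_snoc_of_same_last (ih _ ha₀_lt) hz hz').trans hv.symm)

theorem hammingGraph_induce_compl_preconnected :
    ∀ {n : ℕ} {S : Set (Fin n → Fin q)}, S.ncard < n * (q - 1) →
      ((hammingGraph n q).induce Sᶜ).Preconnected
  | 0, _, hS => by simp at hS
  | 1, S, _ => by simp [hammingGraph_one_eq_top]
  | n + 2, _, hS => hammingGraph_induce_compl_preconnected_succ (by omega)
      (fun _ hT => hammingGraph_induce_compl_preconnected hT) hS

end Connectivity

theorem hammingGraph_regular_and_connected_general (q r : ℕ) (hq : 2 ≤ q) :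
    (∀ v : Fin (r-1) → Fin q,
        {w | (hammingGraph (r-1) q).Adj v w}.ncard = (r-1) * (q-1)) ∧
      GraphKConnected (hammingGraph (r-1) q) ((r-1) * (q-1)) := by
  refine ⟨ncard_hammingGraph_adj, graphKConnected_of_preconnected ?_
    fun _ => hammingGraph_induce_compl_preconnected⟩
  rcases Nat.eq_zero_or_pos (r - 1) with h | h
  · simp [h]
  · calc (r - 1) * (q - 1) < (r - 1) * q := by gcongr; omega
      _ ≤ q ^ (r - 1) := by rw [mul_comm]; exact Nat.mul_le_pow (by omega) _
      _ = Nat.card (Fin (r - 1) → Fin q) := by simp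

/-- the Cartesian product of `r-1` copies of `K_q` is
`(r-1)(q-1)`-regular and `(r-1)(q-1)`-connected. -/
theorem hammingGraph_regular_and_connected (q r : ℕ) (hq : 2 ≤ q) (hr : 2 ≤ r) :
    (∀ v : Fin (r-1) → Fin q,
        {w | (hammingGraph (r-1) q).Adj v w}.ncard = (r-1) * (q-1)) ∧
      GraphKConnected (hammingGraph (r-1) q) ((r-1) * (q-1)) :=
  hammingGraph_regular_and_connected_general q r hq
end

section
/- The auxiliary r-uniform hypergraph on the vertex set of the q-bookpile H(q) of an r-vertex graph H, whose hyperedges are the vertex sets of the q^r standard copies of H, is isomorphic to H_q^r. -/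
/-- A graph together with a labelling of its vertices by the vertices of an
original `r`-vertex graph, and, for each `e ∈ [q]^r`, the embedding of the
standard copy of the original graph indexed by `e`. -/
structure LGraph (q r : ℕ) where
  β : Type
  G : SimpleGraph β
  lab : β → Fin r
  copy : (Fin r → Fin q) → Fin r → β

/-- Vertex set after taking the `q`-book along all copies of the vertex `i`. -/
def StepVerts {q r : ℕ} (X : LGraph q r) (i : Fin r) : Type :=
  {b : X.β // X.lab b = i} ⊕ (Fin q × {b : X.β // X.lab b ≠ i})

/-- Embedding of the `j`-th page into the book along copies of `i`. -/
def stepEmb {q r : ℕ} (X : LGraph q r) (i : Fin r) (j : Fin q) (b : X.β) :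
    StepVerts X i :=
  if h : X.lab b = i then Sum.inl ⟨b, h⟩ else Sum.inr (j, ⟨b, h⟩)

lemma stepEmb_injective {q r : ℕ} (X : LGraph q r) (i : Fin r) (j : Fin q) :
    Function.Injective (stepEmb X i j) := by
  intro a b hab
  unfold stepEmb StepVerts at hab
  split_ifs at hab with h1 h2 h2
  · injection hab with h; exact congrArg Subtype.val h
  · injection hab with h; exact congrArg Subtype.val (congrArg Prod.snd h)

/-- One step of the bookpile construction: the `q`-book along all copies
of the vertex `i`. -/
def pileStep {q r : ℕ} (X : LGraph q r) (i : Fin r) : LGraph q r where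
  β := StepVerts X i
  G := { Adj := fun a b => ∃ (j : Fin q) (u v : X.β),
            X.G.Adj u v ∧ a = stepEmb X i j u ∧ b = stepEmb X i j v
         symm := ⟨by rintro a b ⟨j, u, v, h, ha, hb⟩; exact ⟨j, v, u, h.symm, hb, ha⟩⟩
         loopless := ⟨by
           rintro a ⟨j, u, v, h, ha, hb⟩
           exact X.G.loopless.irrefl v
             (by rwa [stepEmb_injective X i j (ha.symm.trans hb)] at h)⟩ }
  lab := Sum.elim (fun b => X.lab b.1) (fun p => X.lab p.2.1)
  copy := fun e v => stepEmb X i (e i) (X.copy e v)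

/-- The `q`-bookpile `H(q)` of an `r`-vertex graph `H`: iterate the book
operation along the copies of each of the `r` vertices of `H`. -/
def bookpile {r : ℕ} (H : SimpleGraph (Fin r)) (q : ℕ) : LGraph q r :=
  (List.finRange r).foldl pileStep ⟨Fin r, H, id, fun _ v => v⟩

/-- Vertices of the hypergraph `H_q^r`: an `r`-tuple with exactly one entry `α`
(whose position is the first component) and all other entries in `[q]`. -/
def HypVert (q r : ℕ) : Type := Σ i : Fin r, ({j : Fin r // j ≠ i} → Fin q)

/-- Incidence of `H_q^r`: the vertex `v` lies in the edge `e ∈ [q]^r` iff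
substituting the `α`-bit of `v` by an element of `[q]` yields `e`. -/
def HypIncid {q r : ℕ} (v : HypVert q r) (e : Fin r → Fin q) : Prop :=
  ∀ j : {j : Fin r // j ≠ v.1}, v.2 j = e j.1

/-!
After the book steps along the vertices in a set `S`, a vertex of the partial bookpile is
determined by its label `i` together with one page index for every position of `S \ {i}`:
the book step along `a` keeps the vertices labelled `a`, and replaces every other vertex by
`q` copies, the page of a copy becoming its new coordinate at position `a`. The standard copy
indexed by `e` sends `v` to the vertex with label `v` and coordinates read off `e`. After all
`r` steps the vertex set is therefore `V(q, r, α)` (the `α` sitting at the label), and a vertex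
lies in the standard copy `e` exactly when its coordinates agree with `e`.
-/

namespace Bookpile

variable {q r : ℕ}

/-- The vertices of `H_q^r` with their entries read only at the positions `j` with `p j`. -/
abbrev PartialHypVert (q : ℕ) (p : Fin r → Prop) : Type :=
  Σ i : Fin r, ({j : Fin r // p j ∧ j ≠ i} → Fin q)

namespace PartialHypVert

variable {p : Fin r → Prop}

lemma ext {s t : PartialHypVert q p} (h₁ : s.1 = t.1)
    (h₂ : ∀ j (hs : p j ∧ j ≠ s.1) (ht : p j ∧ j ≠ t.1), s.2 ⟨j, hs⟩ = t.2 ⟨j, ht⟩) :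
    s = t := by
  obtain ⟨i, f⟩ := s
  obtain ⟨i', f'⟩ := t
  obtain rfl : i = i' := h₁
  exact congrArg (Sigma.mk i) (funext fun j => h₂ j.1 j.2 j.2)

lemma congr_snd {s t : PartialHypVert q p} (h : s = t) (j : Fin r)
    (hs : p j ∧ j ≠ s.1) (ht : p j ∧ j ≠ t.1) : s.2 ⟨j, hs⟩ = t.2 ⟨j, ht⟩ := by
  subst h; rfl

end PartialHypVert

open PartialHypVert

/-- The invariant of the bookpile construction after the book steps along the vertices `j`
with `p j`: the vertices are coordinatized by `PartialHypVert q p`, compatibly with the labels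
and with the standard copies. -/
def IsPartialPile (p : Fin r → Prop) (X : LGraph q r) : Prop :=
  ∃ φ : X.β ≃ PartialHypVert q p,
    (∀ b, X.lab b = (φ b).1) ∧ ∀ e v, φ (X.copy e v) = ⟨v, fun j => e j⟩

lemma isPartialPile_init (H : SimpleGraph (Fin r)) :
    IsPartialPile (q := q) (fun _ => False) ⟨Fin r, H, id, fun _ v => v⟩ :=
  ⟨⟨fun b => ⟨b, fun j => j.2.1.elim⟩, Sigma.fst, fun _ => rfl,
      fun _ => ext rfl fun _ hs _ => hs.1.elim⟩,
    fun _ => rfl, fun _ _ => ext rfl fun _ hs _ => hs.1.elim⟩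

lemma stepEmb_of_lab_eq {X : LGraph q r} {i : Fin r} (j : Fin q) {b : X.β} (h : X.lab b = i) :
    stepEmb X i j b = Sum.inl ⟨b, h⟩ :=
  dif_pos h

lemma stepEmb_of_lab_ne {X : LGraph q r} {i : Fin r} (j : Fin q) {b : X.β} (h : X.lab b ≠ i) :
    stepEmb X i j b = Sum.inr (j, ⟨b, h⟩) :=
  dif_neg h

section Step

variable {p : Fin r → Prop} {X : LGraph q r} (a : Fin r) (φ : X.β ≃ PartialHypVert q p)
  (hlab : ∀ b, X.lab b = (φ b).1)

/-- A vertex labelled `a` keeps its coordinates and gets `α` at position `a`; the copy of a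
vertex labelled `i ≠ a` on page `c` gets the new entry `c` at position `a`. -/
def stepCoords : StepVerts X a → PartialHypVert q (fun j => p j ∨ j = a) :=
  Sum.elim
    (fun b => ⟨a, fun j => (φ b.1).2 ⟨j, j.2.1.resolve_right j.2.2,
      fun h => j.2.2 (h.trans ((hlab b.1).symm.trans b.2))⟩⟩)
    (fun cb => ⟨(φ cb.2.1).1, fun j =>
      if h : j.1 = a then cb.1 else (φ cb.2.1).2 ⟨j, j.2.1.resolve_right h, j.2.2⟩⟩)

-- The codomain is `StepVerts X a` unfolded: otherwise `dif_pos`/`dif_neg` cannot rewrite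
-- the `if` below, whose branches have the unfolded type.
def stepUncoords (s : PartialHypVert q (fun j => p j ∨ j = a)) :
    {b : X.β // X.lab b = a} ⊕ (Fin q × {b : X.β // X.lab b ≠ a}) :=
  if hs : s.1 = a then
    Sum.inl ⟨φ.symm ⟨a, fun j => s.2 ⟨j, Or.inl j.2.1, fun h => j.2.2 (h.trans hs)⟩⟩,
      by rw [hlab, Equiv.apply_symm_apply]⟩
  else
    Sum.inr (s.2 ⟨a, Or.inr rfl, fun h => hs h.symm⟩,
      ⟨φ.symm ⟨s.1, fun j => s.2 ⟨j, Or.inl j.2.1, j.2.2⟩⟩,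
        by rw [hlab, Equiv.apply_symm_apply]; exact hs⟩)

lemma stepUncoords_stepCoords (hpa : ¬ p a) (x : StepVerts X a) :
    stepUncoords a φ hlab (stepCoords a φ hlab x) = x := by
  rcases x with ⟨b, hb⟩ | ⟨c, b, hb⟩
  · have hφb : (φ b).1 = a := (hlab b).symm.trans hb
    rw [stepUncoords, dif_pos (show (stepCoords a φ hlab (.inl ⟨b, hb⟩)).1 = a from rfl),
      Sum.inl.injEq, Subtype.mk.injEq, Equiv.symm_apply_eq]
    exact ext hφb.symm fun _ _ _ => rfl
  · have hφb : (φ b).1 ≠ a := fun h => hb ((hlab b).trans h)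
    rw [stepUncoords, dif_neg (show (stepCoords a φ hlab (.inr (c, ⟨b, hb⟩))).1 ≠ a from hφb),
      Sum.inr.injEq, Prod.mk.injEq, Subtype.mk.injEq, Equiv.symm_apply_eq]
    exact ⟨dif_pos rfl, ext rfl fun j hs _ => dif_neg fun (h : j = a) => hpa (h ▸ hs.1)⟩

lemma stepCoords_stepUncoords (s : PartialHypVert q (fun j => p j ∨ j = a)) :
    stepCoords a φ hlab (stepUncoords a φ hlab s) = s := by
  obtain ⟨i, f⟩ := s
  by_cases hia : i = a
  · subst hia
    rw [stepUncoords, dif_pos rfl]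
    exact ext rfl fun j hs _ =>
      congr_snd (φ.apply_symm_apply _) j _ ⟨hs.1.resolve_right hs.2, hs.2⟩
  · rw [stepUncoords, dif_neg hia]
    refine ext (congrArg Sigma.fst (φ.apply_symm_apply ⟨i, _⟩) :) fun j hs ht => ?_
    by_cases hja : j = a
    · exact (dif_pos hja).trans (congrArg f (Subtype.ext hja.symm))
    · exact (dif_neg hja).trans
        (congr_snd (φ.apply_symm_apply _) j _ ⟨hs.1.resolve_right hja, ht.2⟩)

lemma stepCoords_stepEmb_copy (hcopy : ∀ e v, φ (X.copy e v) = ⟨v, fun j => e j⟩)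
    (e : Fin r → Fin q) (v : Fin r) :
    stepCoords a φ hlab (stepEmb X a (e a) (X.copy e v)) = ⟨v, fun j => e j⟩ := by
  have hl : X.lab (X.copy e v) = v := by rw [hlab, hcopy]
  by_cases hva : v = a
  · rw [stepEmb_of_lab_eq _ (hl.trans hva)]
    exact ext hva.symm fun j hs ht =>
      congr_snd (hcopy e v) j _ ⟨hs.1.resolve_right hs.2, ht.2⟩
  · rw [stepEmb_of_lab_ne _ (hl.trans_ne hva)]
    refine ext (congrArg Sigma.fst (hcopy e v) :) fun j hs ht => ?_
    by_cases hja : j = a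
    · exact (dif_pos hja).trans (congrArg e hja.symm)
    · exact (dif_neg hja).trans (congr_snd (hcopy e v) j _ ⟨hs.1.resolve_right hja, ht.2⟩)

def stepEquiv (hpa : ¬ p a) : StepVerts X a ≃ PartialHypVert q (fun j => p j ∨ j = a) where
  toFun := stepCoords a φ hlab
  invFun := stepUncoords a φ hlab
  left_inv := stepUncoords_stepCoords a φ hlab hpa
  right_inv := stepCoords_stepUncoords a φ hlab

end Step

namespace IsPartialPile

variable {p : Fin r → Prop} {X : LGraph q r}

lemma pileStep {a : Fin r} (hpa : ¬ p a) (h : IsPartialPile p X) :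
    IsPartialPile (fun j => p j ∨ j = a) (pileStep X a) := by
  obtain ⟨φ, hlab, hcopy⟩ := h
  refine ⟨stepEquiv a φ hlab hpa, ?_, stepCoords_stepEmb_copy a φ hlab hcopy⟩
  rintro (⟨b, hb⟩ | ⟨c, b, hb⟩)
  · exact hb
  · exact hlab b

lemma foldl (h : IsPartialPile p X) {l : List (Fin r)} (hl : l.Nodup) (hlp : ∀ j ∈ l, ¬ p j) :
    IsPartialPile (fun j => p j ∨ j ∈ l) (l.foldl _root_.pileStep X) := by
  induction l generalizing p X with
  | nil => simpa using h
  | cons a l ih =>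
    rw [List.nodup_cons] at hl
    have hstep := h.pileStep (hlp a List.mem_cons_self)
    have := ih hstep hl.2 fun j hj hpj =>
      hpj.elim (hlp j (List.mem_cons_of_mem a hj)) fun hja => hl.1 (hja ▸ hj)
    simpa [or_assoc] using this

lemma exists_equiv_hypVert (h : IsPartialPile p X) (hp : ∀ j, p j) :
    ∃ φ : X.β ≃ HypVert q r, ∀ e v, φ (X.copy e v) = ⟨v, fun j => e j⟩ := by
  obtain ⟨φ, -, hcopy⟩ := h
  let ψ : PartialHypVert q p ≃ HypVert q r := Equiv.sigmaCongrRight fun _ =>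
    (Equiv.subtypeEquivRight fun j => and_iff_right (hp j)).arrowCongr (Equiv.refl _)
  exact ⟨φ.trans ψ, fun e v => by rw [Equiv.trans_apply, hcopy]; rfl⟩

end IsPartialPile

lemma hypIncid_iff_exists {x : HypVert q r} {e : Fin r → Fin q} :
    HypIncid x e ↔ ∃ v, x = ⟨v, fun j => e j⟩ := by
  refine ⟨fun h => ⟨x.1, ?_⟩, ?_⟩
  · obtain ⟨i, f⟩ := x
    exact congrArg (Sigma.mk i) (funext h)
  · rintro ⟨v, rfl⟩ j
    rfl

lemma mem_range_copy_iff_hypIncid {X : LGraph q r} (φ : X.β ≃ HypVert q r)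
    (hcopy : ∀ e v, φ (X.copy e v) = ⟨v, fun j => e j⟩) (b : X.β) (e : Fin r → Fin q) :
    b ∈ Set.range (X.copy e) ↔ HypIncid (φ b) e := by
  rw [Set.mem_range, hypIncid_iff_exists]
  refine exists_congr fun v => ?_
  rw [← hcopy e v, φ.apply_eq_iff_eq, eq_comm]

end Bookpile

open Bookpile in
theorem bookpile_aux_hypergraph_iso_general (r q : ℕ) (H : SimpleGraph (Fin r)) :
    ∃ φ : (bookpile H q).β ≃ HypVert q r,
      ∀ (b : (bookpile H q).β) (e : Fin r → Fin q),
        b ∈ Set.range ((bookpile H q).copy e) ↔ HypIncid (φ b) e := by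
  have hpile : IsPartialPile (fun j => False ∨ j ∈ List.finRange r) (bookpile H q) :=
    (isPartialPile_init H).foldl (List.nodup_finRange r) fun _ _ => id
  obtain ⟨φ, hcopy⟩ := hpile.exists_equiv_hypVert fun j => .inr (List.mem_finRange j)
  exact ⟨φ, mem_range_copy_iff_hypIncid φ hcopy⟩

/-- the auxiliary `r`-uniform hypergraph on the vertex set of the
`q`-bookpile `H(q)` whose hyperedges are the vertex sets of the `q^r` standard
copies of `H` is isomorphic to `H_q^r`. -/
theorem bookpile_aux_hypergraph_iso (r q : ℕ) (H : SimpleGraph (Fin r)) (hq : 0 < q) :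
    ∃ φ : (bookpile H q).β ≃ HypVert q r,
      ∀ (b : (bookpile H q).β) (e : Fin r → Fin q),
        b ∈ Set.range ((bookpile H q).copy e) ↔ HypIncid (φ b) e :=
  bookpile_aux_hypergraph_iso_general r q H
end

section
/- The subhypergraph of H_q^r induced on W_i ∪ U_r is isomorphic to the r-extension of H_q^{r−1}, where W_i = {v ∈ V(q,r,α) : v_r = i} and U_r = {v ∈ V(q,r,α) : the α-bit of v is at position r}. -/
/-- The last position `r` (as an element of `Fin r`). -/
def lastPos (r : ℕ) (h : 0 < r) : Fin r := ⟨r - 1, by omega⟩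

/-- `U_r`: vertices whose `α`-bit is at the last position. -/
def Ualpha (q r : ℕ) (h : 0 < r) : Set (HypVert q r) := {v | v.1 = lastPos r h}

/-- `W_c`: vertices whose last coordinate equals `c ∈ [q]`. -/
def Wslice (q r : ℕ) (h : 0 < r) (c : Fin q) : Set (HypVert q r) :=
  {v | ∃ hne : v.1 ≠ lastPos r h, v.2 ⟨lastPos r h, Ne.symm hne⟩ = c}

/-- Incidence relation of the `r`-extension of an `(r-1)`-uniform hypergraph
with vertex type `Vt` and edges indexed by `Et`: the new vertex attached to an
edge (an element of `Et` on the right) lies only in that edge. -/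
def ExtIncid {Vt Et : Type} (Inc : Vt → Et → Prop) (x : Vt ⊕ Et) (e : Et) : Prop :=
  Sum.elim (fun w => Inc w e) (fun f => f = e) x

namespace SliceAux

variable {q r : ℕ}

def emb (k : Fin (r - 1)) : Fin r := ⟨k.val, by have := k.isLt; omega⟩

lemma emb_ne_last (h : 0 < r) (k : Fin (r - 1)) : emb k ≠ lastPos r h := by
  intro he
  have h1 : k.val = r - 1 := congrArg Fin.val he
  have h2 := k.isLt
  omega

def down (h : 0 < r) (j : Fin r) (hj : j ≠ lastPos r h) : Fin (r - 1) :=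
  ⟨j.val, by
    have h1 := j.isLt
    have h2 : j.val ≠ r - 1 := fun hv => hj (Fin.ext hv)
    omega⟩

lemma down_ne {h : 0 < r} {j : Fin r} {hj : j ≠ lastPos r h} {b : Fin (r-1)}
    (hb : j ≠ emb b) : down h j hj ≠ b := by
  intro he
  have hval : j.val = b.val := congrArg Fin.val he
  exact hb (Fin.ext hval)

lemma emb_ne {h : 0 < r} {j : Fin (r-1)} {a : Fin r} {ha : a ≠ lastPos r h}
    (hb : j ≠ down h a ha) : emb j ≠ a := by
  intro he
  have hval : j.val = a.val := congrArg Fin.val he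
  exact hb (Fin.ext hval)

def phi (h : 0 < r) (i : Fin q) :
    ↥(Wslice q r h i ∪ Ualpha q r h) ≃ (HypVert q (r-1) ⊕ (Fin (r-1) → Fin q)) where
  toFun v :=
    if hv : v.1.1 = lastPos r h then
      Sum.inr (fun k => v.1.2 ⟨emb k, hv ▸ emb_ne_last h k⟩)
    else
      Sum.inl ⟨down h v.1.1 hv, fun j => v.1.2 ⟨emb j.1, emb_ne j.2⟩⟩
  invFun x :=
    match x with
    | Sum.inl w =>
        ⟨⟨emb w.1, fun j => if hj : j.1 = lastPos r h then i
            else w.2 ⟨down h j.1 hj, down_ne j.2⟩⟩,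
          Or.inl ⟨emb_ne_last h w.1, dif_pos rfl⟩⟩
    | Sum.inr f =>
        ⟨⟨lastPos r h, fun j => f (down h j.1 j.2)⟩, Or.inr rfl⟩
  left_inv := by
    rintro ⟨⟨a, g⟩, hv⟩
    by_cases ha : a = lastPos r h
    · subst ha
      dsimp only
      rw [dif_pos rfl]
      rfl
    · have hgi : g ⟨lastPos r h, Ne.symm ha⟩ = i := by
        rcases hv with ⟨hne, hval⟩ | hlast
        · exact hval
        · exact absurd hlast ha
      dsimp only
      rw [dif_neg ha]
      apply Subtype.ext
      refine Sigma.ext rfl (heq_of_eq (funext fun j => ?_))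
      dsimp only
      by_cases hj : (j.1 : Fin r) = lastPos r h
      · rw [dif_pos hj, ← hgi]
        congr 1
        exact Subtype.ext hj.symm
      · rw [dif_neg hj]; rfl
  right_inv := by
    rintro (⟨b, g⟩ | f)
    · dsimp only
      rw [dif_neg (emb_ne_last h b)]
      refine congrArg Sum.inl (Sigma.ext rfl (heq_of_eq (funext fun j => ?_)))
      dsimp only
      rw [dif_neg (emb_ne_last h j.1)]
      rfl
    · dsimp only
      rw [dif_pos rfl]
      rfl

def psi (h : 0 < r) (i : Fin q) :
    {e : Fin r → Fin q // e (lastPos r h) = i} ≃ (Fin (r-1) → Fin q) where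
  toFun e k := e.1 (emb k)
  invFun f :=
    ⟨fun j => if hj : j = lastPos r h then i else f (down h j hj), dif_pos rfl⟩
  left_inv e := by
    apply Subtype.ext
    funext j
    dsimp only
    by_cases hj : j = lastPos r h
    · rw [dif_pos hj, hj, e.2]
    · rw [dif_neg hj]; rfl
  right_inv f := by
    funext k
    dsimp only
    rw [dif_neg (emb_ne_last h k)]
    rfl

end SliceAux

/-- the subhypergraph of `H_q^r` induced on `W_i ∪ U_r` is
isomorphic to the `r`-extension of `H_q^{r-1}`.  (The induced edges are exactly
those `e ∈ [q]^r` with last entry `i`.) -/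
theorem induced_slice_iso_extension (q r : ℕ) (hr : 2 ≤ r) (i : Fin q) :
    ∃ (φ : ↥(Wslice q r (by omega) i ∪ Ualpha q r (by omega)) ≃
            (HypVert q (r-1) ⊕ (Fin (r-1) → Fin q)))
      (ψ : {e : Fin r → Fin q // e (lastPos r (by omega)) = i} ≃ (Fin (r-1) → Fin q)),
      ∀ (v : ↥(Wslice q r (by omega) i ∪ Ualpha q r (by omega)))
        (e : {e : Fin r → Fin q // e (lastPos r (by omega)) = i}),
        HypIncid v.1 e.1 ↔ ExtIncid (HypIncid (q := q) (r := r-1)) (φ v) (ψ e) := by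
  have h1 : 0 < r := by omega
  refine ⟨SliceAux.phi h1 i, SliceAux.psi h1 i, ?_⟩
  rintro ⟨⟨a, g⟩, hv⟩ ⟨e, he⟩
  dsimp only [SliceAux.phi, SliceAux.psi, Equiv.coe_fn_mk]
  by_cases ha : a = lastPos r h1
  · subst ha
    rw [dif_pos rfl]
    show HypIncid ⟨lastPos r h1, g⟩ e ↔
      (fun k => g ⟨SliceAux.emb k, _⟩) = (fun k => e (SliceAux.emb k))
    constructor
    · intro H
      funext k
      exact H ⟨SliceAux.emb k, SliceAux.emb_ne_last h1 k⟩
    · intro H j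
      exact congrFun H (SliceAux.down h1 j.1 j.2)
  · have hgi : g ⟨lastPos r h1, Ne.symm ha⟩ = i := by
      rcases hv with ⟨hne, hval⟩ | hlast
      · exact hval
      · exact absurd hlast ha
    rw [dif_neg ha]
    show HypIncid ⟨a, g⟩ e ↔
      HypIncid (⟨SliceAux.down h1 a ha, fun j => g ⟨SliceAux.emb j.1, SliceAux.emb_ne j.2⟩⟩ :
        HypVert q (r-1)) (fun k => e (SliceAux.emb k))
    constructor
    · intro H j
      exact H ⟨SliceAux.emb j.1, @SliceAux.emb_ne r h1 j.1 a ha j.2⟩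
    · intro H j
      show g j = e j.1
      by_cases hj : (j.1 : Fin r) = lastPos r h1
      · have h2 : g j = i := by
          rw [← hgi]; congr 1; exact Subtype.ext hj
        have h3 : e j.1 = i := by rw [hj]; exact he
        rw [h2, h3]
      · exact H ⟨SliceAux.down h1 j.1 hj, SliceAux.down_ne j.2⟩
end
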